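/- The polynomial map F of K^4 defined by F_1 = X_1, F_2 = X_2 - X_1^3/3, F_3 = X_3 - X_1^2X_2 - e_3X_1X_2^2 + g_4X_1X_2X_3 - k_3X_2^3 + m_4X_2^2X_3 + g_4^2X_2^2X_4, F_4 = X_4 - X_1^2X_3 - e_4X_1X_2^2 - (2m_4/g_4)X_1X_2X_3 - g_4X_1X_2X_4 - k_4X_2^3 - (m_4^2/g_4^2)X_2^2X_3 - m_4X_2^2X_4 (with g_4 ≠ 0) factors as F = G ∘ H, where H = (X_1, X_2, F_3, F_4) and G = (X_1, F_2, X_3, X_4), and both G and H are nice polynomial maps. -/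

import Mathlib

open MvPolynomial Finset

noncomputable def seqP {K : Type*} [Field K] {n : ℕ}
    (F : Fin n → MvPolynomial (Fin n) K) : ℕ → Fin n → MvPolynomial (Fin n) K
  | 0 => fun i => X i
  | k + 1 => fun i => bind₁ F (seqP F k i) - seqP F k i

/-!
`G` and `H` are affine over a subring they fix: `Φ = X + M *ᵥ X + c` with the entries of `M` and
`c` fixed by substitution along `Φ`, and `M * M = 0`. Then `P₁ = M *ᵥ X + c` and
`P₂ = M *ᵥ (Φ - X) = M *ᵥ c` is fixed, so `P₃ = 0`. For `G` take `M = 0`. For `H` the fixed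
subring is `K[X₀, X₁]`, and with `t = m₄ / g₄` the linear part is `M = u vᵀ` for
`u = (0, 0, g₄X₁, -(X₀ + tX₁))`, `v = (0, 0, X₀ + tX₁, g₄X₁)`, so `M * M = (v ⬝ᵥ u) • M = 0`.
-/

open Matrix

theorem comp_mulVec_of_map_eq {R Φ m n : Type*} [NonAssocSemiring R] [Fintype n] [FunLike Φ R R]
    [RingHomClass Φ R R] (f : Φ) {M : Matrix m n R} (hM : M.map f = M) (v : n → R) :
    f ∘ (M *ᵥ v) = M *ᵥ (f ∘ v) := by
  funext i
  simpa [hM] using RingHom.map_mulVec (f : R →+* R) M v i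

section

variable {K : Type*} [Field K] {n : ℕ}

theorem seqP_zero (F : Fin n → MvPolynomial (Fin n) K) : seqP F 0 = X := rfl

theorem seqP_succ (F : Fin n → MvPolynomial (Fin n) K) (k : ℕ) :
    seqP F (k + 1) = bind₁ F ∘ seqP F k - seqP F k := rfl

theorem seqP_three_eq_zero_of_eq_X_add_mulVec_add {F c : Fin n → MvPolynomial (Fin n) K}
    {M : Matrix (Fin n) (Fin n) (MvPolynomial (Fin n) K)} (hF : F = X + M *ᵥ X + c)
    (hM : M.map (bind₁ F) = M) (hc : bind₁ F ∘ c = c) (hMM : M * M = 0) :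
    seqP F 3 = 0 := by
  have hX : bind₁ F ∘ X = F := by
    funext i; exact bind₁_X_right F i
  have h1 : seqP F 1 = M *ᵥ X + c := by
    rw [seqP_succ, seqP_zero, hX, hF]; abel
  have h2 : seqP F 2 = M *ᵥ c := by
    have hadd : bind₁ F ∘ (M *ᵥ X + c) = bind₁ F ∘ (M *ᵥ X) + bind₁ F ∘ c := by
      funext i; exact map_add _ _ _
    rw [seqP_succ, h1, hadd, comp_mulVec_of_map_eq _ hM, hX, hc, hF, mulVec_add, mulVec_add,
      mulVec_mulVec, hMM, zero_mulVec]
    abel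
  rw [seqP_succ, h2, comp_mulVec_of_map_eq _ hM, hc, sub_self]

theorem seqP_three_eq_zero_of_eq_X_add {F c : Fin n → MvPolynomial (Fin n) K}
    (hF : F = X + c) (hc : bind₁ F ∘ c = c) : seqP F 3 = 0 :=
  seqP_three_eq_zero_of_eq_X_add_mulVec_add (M := 0) (by rw [hF, zero_mulVec, add_zero])
    (by ext; simp) hc (zero_mul _)

theorem seqP_three_eq_zero_of_eq_X_add_vecMulVec_mulVec_add
    {F u v c : Fin n → MvPolynomial (Fin n) K} (hF : F = X + vecMulVec u v *ᵥ X + c)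
    (hu : bind₁ F ∘ u = u) (hv : bind₁ F ∘ v = v) (hc : bind₁ F ∘ c = c) (huv : v ⬝ᵥ u = 0) :
    seqP F 3 = 0 := by
  refine seqP_three_eq_zero_of_eq_X_add_mulVec_add hF ?_ hc ?_
  · refine Matrix.ext fun i j => ?_
    simpa [vecMulVec_apply] using congr_arg₂ (· * ·) (congrFun hu i) (congrFun hv j)
  · rw [vecMulVec_mul_vecMulVec, huv, zero_smul, vecMulVec_zero]

end

theorem stmt18_general {K : Type*} [Field K]
    (e3 e4 g4 k3 k4 m4 : K) (hg4 : g4 ≠ 0)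
    (F G H : Fin 4 → MvPolynomial (Fin 4) K)
    (hF : F = ![X 0,
      X 1 - C (3⁻¹ : K) * X 0 ^ 3,
      X 2 - X 0 ^ 2 * X 1 - C e3 * X 0 * X 1 ^ 2 + C g4 * X 0 * X 1 * X 2
        - C k3 * X 1 ^ 3 + C m4 * X 1 ^ 2 * X 2 + C (g4 ^ 2) * X 1 ^ 2 * X 3,
      X 3 - X 0 ^ 2 * X 2 - C e4 * X 0 * X 1 ^ 2 - C (2 * m4 / g4) * X 0 * X 1 * X 2
        - C g4 * X 0 * X 1 * X 3 - C k4 * X 1 ^ 3 - C (m4 ^ 2 / g4 ^ 2) * X 1 ^ 2 * X 2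
        - C m4 * X 1 ^ 2 * X 3])
    (hH : H = ![X 0, X 1, F 2, F 3])
    (hG : G = ![X 0, F 1, X 2, X 3]) :
    (∀ i, F i = bind₁ H (G i)) ∧
    (∃ m, ∀ i, seqP H m i = 0) ∧
    (∃ m, ∀ i, seqP G m i = 0) := by
  obtain ⟨t, rfl⟩ : ∃ t, m4 = g4 * t := ⟨m4 / g4, by field_simp⟩
  rw [show 2 * (g4 * t) / g4 = 2 * t by field_simp,
    show (g4 * t) ^ 2 / g4 ^ 2 = t ^ 2 by field_simp] at hF
  subst hF
  set u : Fin 4 → MvPolynomial (Fin 4) K := ![0, 0, C g4 * X 1, -(X 0 + C t * X 1)]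
  set v : Fin 4 → MvPolynomial (Fin 4) K := ![0, 0, X 0 + C t * X 1, C g4 * X 1]
  set c : Fin 4 → MvPolynomial (Fin 4) K :=
    ![0, 0, -X 0 ^ 2 * X 1 - C e3 * X 0 * X 1 ^ 2 - C k3 * X 1 ^ 3,
      -C e4 * X 0 * X 1 ^ 2 - C k4 * X 1 ^ 3]
  have hHform : H = X + vecMulVec u v *ᵥ X + c := by
    subst hH; funext i
    fin_cases i <;>
      simp only [Pi.add_apply, mulVec, dotProduct, Fin.sum_univ_four, vecMulVec_apply, u, v, c,
        Matrix.cons_val, Fin.reduceFinMk, cons_val_zero, cons_val_one, C_mul, C_pow, map_ofNat] <;>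
      ring
  have hGform : G = X + ![0, -C 3⁻¹ * X 0 ^ 3, 0, 0] := by
    subst hG; funext i; fin_cases i <;> simp [sub_eq_add_neg]
  refine ⟨?_, ⟨3, congrFun (seqP_three_eq_zero_of_eq_X_add_vecMulVec_mulVec_add hHform
    ?_ ?_ ?_ ?_)⟩, ⟨3, congrFun (seqP_three_eq_zero_of_eq_X_add hGform ?_)⟩⟩
  · intro i; subst hH hG; fin_cases i <;> simp
  · funext i; fin_cases i <;> simp [hH, u]
  · funext i; fin_cases i <;> simp [hH, v]
  · funext i; fin_cases i <;> simp [hH, c]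
  · simp only [dotProduct, Fin.sum_univ_four, u, v, Matrix.cons_val]
    ring
  · funext i; fin_cases i <;> simp [hG]

/-- The eighth class in Hubbers' classification of cubic homogeneous
automorphisms of `K⁴` factors as `F = G ∘ H` with `H = (X₁, X₂, F₃, F₄)` and
`G = (X₁, F₂, X₃, X₄)`, both of which are nice. -/
theorem stmt18 {K : Type*} [Field K] [CharZero K]
    (e3 e4 g4 k3 k4 m4 : K) (hg4 : g4 ≠ 0)
    (F G H : Fin 4 → MvPolynomial (Fin 4) K)
    (hF : F = ![X 0,
      X 1 - C (3⁻¹ : K) * X 0 ^ 3,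
      X 2 - X 0 ^ 2 * X 1 - C e3 * X 0 * X 1 ^ 2 + C g4 * X 0 * X 1 * X 2
        - C k3 * X 1 ^ 3 + C m4 * X 1 ^ 2 * X 2 + C (g4 ^ 2) * X 1 ^ 2 * X 3,
      X 3 - X 0 ^ 2 * X 2 - C e4 * X 0 * X 1 ^ 2 - C (2 * m4 / g4) * X 0 * X 1 * X 2
        - C g4 * X 0 * X 1 * X 3 - C k4 * X 1 ^ 3 - C (m4 ^ 2 / g4 ^ 2) * X 1 ^ 2 * X 2
        - C m4 * X 1 ^ 2 * X 3])
    (hH : H = ![X 0, X 1, F 2, F 3])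
    (hG : G = ![X 0, F 1, X 2, X 3]) :
    (∀ i, F i = bind₁ H (G i)) ∧
    (∃ m, ∀ i, seqP H m i = 0) ∧
    (∃ m, ∀ i, seqP G m i = 0) :=
  stmt18_general e3 e4 g4 k3 k4 m4 hg4 F G H hF hH hG
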